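/- Fix δ = 1/100. There exists a constant B > 0 such that for every ε with 0 < ε < 1/2 there exists a twice continuously differentiable function φ : ℝ → ℝ with the following properties: (i) φ(x) = (1−ε)·x for all x ≥ −(1/4 + δ)²; (ii) φ(x) = x/(1−ε) for all x with −(1/2 + δ)² ≤ x ≤ −(1/2 − δ)²; (iii) φ(x) = x for all x ≤ −(1−δ)²; (iv) for all x ∈ [−1, 0]: 1 − εB ≤ φ′(x) ≤ 1 + εB, −εB ≤ φ″(x) ≤ εB, and (1 + εB)·x ≤ φ(x) ≤ (1 − εB)·x. -/

import Mathlib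

/-!
Write `φ(x) = x + ε · x · (g(x)/(1 - ε) - f(x))`, where `f = rampUp` is a smooth step from `0`
(below `-(1/2 - δ)²`) to `1` (above `-(1/4 + δ)²`) and `g = plateau` is a smooth bump equal to
`1` on `[-(1/2 + δ)², -(1/2 - δ)²]` and vanishing outside `(-(1 - δ)², -(1/4 + δ)²)`. The three
linear pieces are then read off directly. Since `1/(1 - ε) ≤ 2`, the correction `φ - id` is `ε`
times a function whose first two derivatives on `[-1, 0]` are bounded by those of the fixed
functions `x f(x)` and `x g(x)`, which gives all the estimates with a constant independent of `ε`.
-/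

open Real Set

noncomputable def smoothStep (a b x : ℝ) : ℝ := smoothTransition ((x - a) / (b - a))

section smoothStep

variable {a b : ℝ}

theorem contDiff_smoothStep {n : ℕ∞} : ContDiff ℝ n (smoothStep a b) :=
  smoothTransition.contDiff.comp ((contDiff_id.sub contDiff_const).div_const _)

theorem smoothStep_nonneg (x : ℝ) : 0 ≤ smoothStep a b x := smoothTransition.nonneg _

theorem smoothStep_le_one (x : ℝ) : smoothStep a b x ≤ 1 := smoothTransition.le_one _

theorem smoothStep_of_le (hab : a ≤ b) {x : ℝ} (hx : x ≤ a) : smoothStep a b x = 0 :=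
  smoothTransition.zero_of_nonpos (div_nonpos_of_nonpos_of_nonneg (by linarith) (by linarith))

theorem smoothStep_of_ge (hab : a < b) {x : ℝ} (hx : b ≤ x) : smoothStep a b x = 1 :=
  smoothTransition.one_of_one_le ((one_le_div (by linarith)).2 (by linarith))

end smoothStep

noncomputable def rampUp : ℝ → ℝ :=
  smoothStep (-(1 / 2 - 1 / 100) ^ 2) (-(1 / 4 + 1 / 100) ^ 2)

noncomputable def plateau (x : ℝ) : ℝ :=
  smoothStep (-(1 - 1 / 100) ^ 2) (-(1 / 2 + 1 / 100) ^ 2) x * (1 - rampUp x)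

theorem contDiff_rampUp {n : ℕ∞} : ContDiff ℝ n rampUp := contDiff_smoothStep

theorem contDiff_plateau {n : ℕ∞} : ContDiff ℝ n plateau :=
  contDiff_smoothStep.mul (contDiff_const.sub contDiff_rampUp)

theorem rampUp_mem_Icc (x : ℝ) : rampUp x ∈ Icc 0 1 :=
  ⟨smoothStep_nonneg x, smoothStep_le_one x⟩

theorem plateau_mem_Icc (x : ℝ) : plateau x ∈ Icc 0 1 := by
  obtain ⟨h₀, h₁⟩ := rampUp_mem_Icc x
  exact ⟨mul_nonneg (smoothStep_nonneg x) (by linarith),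
    mul_le_one₀ (smoothStep_le_one x) (by linarith) (by linarith)⟩

theorem abs_rampUp_le_one (x : ℝ) : |rampUp x| ≤ 1 :=
  (abs_of_nonneg (rampUp_mem_Icc x).1).trans_le (rampUp_mem_Icc x).2

theorem abs_plateau_le_one (x : ℝ) : |plateau x| ≤ 1 :=
  (abs_of_nonneg (plateau_mem_Icc x).1).trans_le (plateau_mem_Icc x).2

theorem rampUp_of_le {x : ℝ} (hx : x ≤ -(1 / 2 - 1 / 100) ^ 2) : rampUp x = 0 :=
  smoothStep_of_le (by norm_num) hx

theorem rampUp_of_ge {x : ℝ} (hx : -(1 / 4 + 1 / 100) ^ 2 ≤ x) : rampUp x = 1 :=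
  smoothStep_of_ge (by norm_num) hx

theorem plateau_of_le {x : ℝ} (hx : x ≤ -(1 - 1 / 100) ^ 2) : plateau x = 0 := by
  rw [plateau, smoothStep_of_le (by norm_num) hx, zero_mul]

theorem plateau_of_ge {x : ℝ} (hx : -(1 / 4 + 1 / 100) ^ 2 ≤ x) : plateau x = 0 := by
  rw [plateau, rampUp_of_ge hx, sub_self, mul_zero]

theorem plateau_of_mem_Icc {x : ℝ}
    (hx : x ∈ Icc (-(1 / 2 + 1 / 100) ^ 2) (-(1 / 2 - 1 / 100) ^ 2)) :
    plateau x = 1 := by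
  rw [plateau, smoothStep_of_ge (by norm_num) hx.1, rampUp_of_le hx.2]
  norm_num

theorem IsCompact.exists_bound_deriv_deriv_of_contDiff {s : Set ℝ} (hs : IsCompact s)
    {f : ℝ → ℝ} (hf : ContDiff ℝ 2 f) :
    ∃ M, 0 ≤ M ∧ ∀ x ∈ s, |deriv f x| ≤ M ∧ |deriv (deriv f) x| ≤ M := by
  have hf' : ContDiff ℝ 1 (deriv f) := (contDiff_succ_iff_deriv.1 hf).2.2
  obtain ⟨C₁, hC₁⟩ :=
    hs.exists_bound_of_continuousOn (hf.continuous_deriv one_le_two).continuousOn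
  obtain ⟨C₂, hC₂⟩ := hs.exists_bound_of_continuousOn hf'.continuous_deriv_one.continuousOn
  refine ⟨|C₁| + |C₂|, by positivity, fun x hx => ⟨?_, ?_⟩⟩
  · linarith [hC₁ x hx, le_abs_self C₁, abs_nonneg C₂, Real.norm_eq_abs (deriv f x)]
  · linarith [hC₂ x hx, le_abs_self C₂, abs_nonneg C₁, Real.norm_eq_abs (deriv (deriv f) x)]

section perturbation

variable {U V : ℝ → ℝ} (ε c : ℝ)

theorem deriv_add_mul_sub {h : ℝ → ℝ} (hh : Differentiable ℝ h) (hU : Differentiable ℝ U)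
    (hV : Differentiable ℝ V) :
    deriv (fun x => h x + ε * (c * V x - U x)) =
      fun x => deriv h x + ε * (c * deriv V x - deriv U x) := by
  funext x
  exact ((hh x).hasDerivAt.add (((hV x).hasDerivAt.const_mul c).sub (hU x).hasDerivAt
    |>.const_mul ε)).deriv

theorem deriv_deriv_id_add_mul_sub (hU : ContDiff ℝ 2 U) (hV : ContDiff ℝ 2 V) :
    deriv (deriv (fun x => x + ε * (c * V x - U x))) =
      fun x => ε * (c * deriv (deriv V) x - deriv (deriv U) x) := by
  have hU' : ContDiff ℝ 1 (deriv U) := (contDiff_succ_iff_deriv.1 hU).2.2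
  have hV' : ContDiff ℝ 1 (deriv V) := (contDiff_succ_iff_deriv.1 hV).2.2
  rw [deriv_add_mul_sub ε c differentiable_fun_id (hU.differentiable two_ne_zero)
    (hV.differentiable two_ne_zero), deriv_id'',
    deriv_add_mul_sub ε c (differentiable_const 1) (hU'.differentiable one_ne_zero)
    (hV'.differentiable one_ne_zero)]
  simp only [deriv_const', zero_add]

end perturbation

theorem abs_mul_sub_le {c a b A B : ℝ} (hc : c ∈ Icc 0 2) (ha : |a| ≤ A) (hb : |b| ≤ B) :
    |c * a - b| ≤ 2 * A + B := by
  calc |c * a - b| ≤ |c * a| + |b| := abs_sub _ _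
    _ = c * |a| + |b| := by rw [abs_mul, abs_of_nonneg hc.1]
    _ ≤ 2 * A + B := by gcongr; exact hc.2

theorem add_mul_mem_Icc {t e w B : ℝ} (he : 0 ≤ e) (hw : |w| ≤ B) :
    t + e * w ∈ Icc (t - e * B) (t + e * B) := by
  have := abs_le.1 hw
  constructor <;> nlinarith

theorem add_mul_mul_mem_Icc_of_nonpos {x e k B : ℝ} (hx : x ≤ 0) (he : 0 ≤ e)
    (hk : |k| ≤ B) :
    x + e * x * k ∈ Icc ((1 + e * B) * x) ((1 - e * B) * x) := by
  have := abs_le.1 hk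
  constructor <;> nlinarith [mul_nonneg he (neg_nonneg.2 hx)]

noncomputable def reparam (ε x : ℝ) : ℝ :=
  x + ε * ((1 - ε)⁻¹ * (x * plateau x) - x * rampUp x)

section reparam

variable {ε x : ℝ}

theorem contDiff_reparam {n : ℕ∞} : ContDiff ℝ n (reparam ε) := by
  have := contDiff_rampUp (n := n)
  have := contDiff_plateau (n := n)
  unfold reparam; fun_prop

theorem reparam_of_ge (hx : -(1 / 4 + 1 / 100) ^ 2 ≤ x) : reparam ε x = (1 - ε) * x := by
  rw [reparam, plateau_of_ge hx, rampUp_of_ge hx]; ring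

theorem reparam_of_mem_Icc (hε : ε ≠ 1)
    (hx : x ∈ Icc (-(1 / 2 + 1 / 100) ^ 2) (-(1 / 2 - 1 / 100) ^ 2)) :
    reparam ε x = x / (1 - ε) := by
  rw [reparam, plateau_of_mem_Icc hx, rampUp_of_le hx.2]
  field_simp [sub_ne_zero.2 hε.symm]
  ring

theorem reparam_of_le (hx : x ≤ -(1 - 1 / 100) ^ 2) : reparam ε x = x := by
  rw [reparam, plateau_of_le hx, rampUp_of_le (by norm_num at hx ⊢; linarith)]; ring

end reparam

theorem reparametrization_function :
    ∃ B : ℝ, 0 < B ∧ ∀ ε : ℝ, 0 < ε → ε < 1 / 2 →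
      ∃ φ : ℝ → ℝ, ContDiff ℝ 2 φ ∧
        (∀ x : ℝ, -(1 / 4 + 1 / 100) ^ 2 ≤ x → φ x = (1 - ε) * x) ∧
        (∀ x : ℝ, -(1 / 2 + 1 / 100) ^ 2 ≤ x → x ≤ -(1 / 2 - 1 / 100) ^ 2 →
          φ x = x / (1 - ε)) ∧
        (∀ x : ℝ, x ≤ -(1 - 1 / 100) ^ 2 → φ x = x) ∧
        (∀ x ∈ Set.Icc (-1 : ℝ) 0,
          (1 - ε * B ≤ deriv φ x ∧ deriv φ x ≤ 1 + ε * B) ∧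
          (-(ε * B) ≤ deriv (deriv φ) x ∧ deriv (deriv φ) x ≤ ε * B) ∧
          ((1 + ε * B) * x ≤ φ x ∧ φ x ≤ (1 - ε * B) * x)) := by
  have hU : ContDiff ℝ 2 fun x => x * rampUp x := contDiff_id.mul contDiff_rampUp
  have hV : ContDiff ℝ 2 fun x => x * plateau x := contDiff_id.mul contDiff_plateau
  obtain ⟨MU, hMU₀, hMU⟩ :=
    (isCompact_Icc (a := -1) (b := 0)).exists_bound_deriv_deriv_of_contDiff hU
  obtain ⟨MV, hMV₀, hMV⟩ :=
    (isCompact_Icc (a := -1) (b := 0)).exists_bound_deriv_deriv_of_contDiff hV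
  -- the `+ 3` absorbs `|g / (1 - ε) - f| ≤ 3`, which drives the bound on `φ` itself
  refine ⟨2 * MV + MU + 3, by positivity, fun ε hε hε₂ => ⟨reparam ε, contDiff_reparam,
    fun x => reparam_of_ge, fun x h₁ h₂ => reparam_of_mem_Icc (by linarith) ⟨h₁, h₂⟩,
    fun x => reparam_of_le, fun x hx => ?_⟩⟩
  have hc : (1 - ε)⁻¹ ∈ Icc 0 2 :=
    ⟨by bound, inv_le_of_inv_le₀ (by norm_num) (by linarith)⟩
  have hw : ∀ {a b : ℝ}, |a| ≤ MV → |b| ≤ MU →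
      |(1 - ε)⁻¹ * a - b| ≤ 2 * MV + MU + 3 :=
    fun ha hb => (abs_mul_sub_le hc ha hb).trans (by linarith)
  unfold reparam
  refine ⟨?_, ?_, ?_⟩
  · rw [deriv_add_mul_sub ε _ differentiable_fun_id (hU.differentiable two_ne_zero)
      (hV.differentiable two_ne_zero), deriv_id'']
    exact add_mul_mem_Icc hε.le (hw (hMV x hx).1 (hMU x hx).1)
  · rw [deriv_deriv_id_add_mul_sub ε _ hU hV, ← abs_le, abs_mul, abs_of_pos hε]
    exact mul_le_mul_of_nonneg_left (hw (hMV x hx).2 (hMU x hx).2) hε.le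
  · have hk := (abs_mul_sub_le hc (abs_plateau_le_one x) (abs_rampUp_le_one x)).trans
      (by linarith : (2 * 1 + 1 : ℝ) ≤ 2 * MV + MU + 3)
    obtain ⟨h₁, h₂⟩ := add_mul_mul_mem_Icc_of_nonpos hx.2 hε.le hk
    constructor <;> linarith
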